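/- arXiv:1311.7019 — 15 statements merged into one kernel-verified Lean document; each statement's English description precedes it below -/
import Mathlib

section
/- Adler's map admits the Lax representation L(u;a,λ)·L(v;b,λ) = L(y;b,λ)·L(x;a,λ): for all a, b, x, y, λ ∈ ℂ with x + y ≠ 0, setting u = y + (a-b)/(x+y) and v = x - (a-b)/(x+y), the 2×2 matrix identity L(u;a,λ)·L(v;b,λ) = L(y;b,λ)·L(x;a,λ) holds. -/
/-- The Lax matrix of Adler's map: `L(x;a,λ) = [[x, 1],[x² - a - λ, x]]`. -/
noncomputable def adlerLax (x a lam : ℂ) : Matrix (Fin 2) (Fin 2) ℂ :=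
  !![x, 1; x ^ 2 - a - lam, x]

/-- Adler's map admits the Lax representation
`L(u;a,λ)·L(v;b,λ) = L(y;b,λ)·L(x;a,λ)`. -/
theorem adler_lax_representation (a b x y lam : ℂ) (h : x + y ≠ 0)
    (u v : ℂ) (hu : u = y + (a - b) / (x + y)) (hv : v = x - (a - b) / (x + y)) :
    adlerLax u a lam * adlerLax v b lam = adlerLax y b lam * adlerLax x a lam := by
  subst hu hv
  unfold adlerLax
  ext i j
  fin_cases i <;> fin_cases j <;>
    simp [Matrix.mul_apply, Fin.sum_univ_two] <;> field_simp <;> ring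
end

section
/- Adler's map satisfies the parametric Yang–Baxter equation: for all parameters a, b, c ∈ ℂ and all (x,y,z) ∈ ℂ³ such that every denominator arising in both composite maps is nonzero, the two compositions Y¹²_{a,b} ∘ Y¹³_{a,c} ∘ Y²³_{b,c} and Y²³_{b,c} ∘ Y¹³_{a,c} ∘ Y¹²_{a,b} agree at (x,y,z). -/
/-- First component of Adler's map: `u(x,y;a,b) = y + (a-b)/(x+y)`. -/
noncomputable def adlerU (a b x y : ℂ) : ℂ := y + (a - b) / (x + y)

/-- Second component of Adler's map: `v(x,y;a,b) = x - (a-b)/(x+y)`. -/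
noncomputable def adlerV (a b x y : ℂ) : ℂ := x - (a - b) / (x + y)

/-!
Adler's map preserves the sum of its arguments, `u + v = x + y`, and each component is determined
by that sum. Put `s = x + y`, `t = y + z`, `P = s t - (b - c)` and `Q = s t + (a - b)`. Using the
conserved sums, the denominators of the left composite are `t`, `P / t` and `t Q / P`, those of the
right composite are `s`, `Q / s` and `s P / Q`; in particular `P` and `Q` are nonzero once the
first two denominators on each side are. With the nested denominators replaced by these closed
forms, both sides are rational functions in `x, y, z` over the denominators `s, t, P, Q`, and the
Yang–Baxter equation becomes a polynomial identity.
-/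

section Adler

theorem adlerU_add_adlerV (a b x y : ℂ) : adlerU a b x y + adlerV a b x y = x + y := by
  rw [adlerU, adlerV]
  ring

variable {a b c x y z : ℂ}

theorem adlerU_eq_of_add_eq {w : ℂ} (h : x + y = w) : adlerU a b x y = y + (a - b) / w := by
  rw [adlerU, h]

theorem adlerV_eq_of_add_eq {w : ℂ} (h : x + y = w) : adlerV a b x y = x - (a - b) / w := by
  rw [adlerV, h]

theorem add_adlerV_eq_div (ht : y + z ≠ 0) :
    x + adlerV b c y z = ((x + y) * (y + z) - (b - c)) / (y + z) := by
  rw [adlerV]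
  field_simp
  ring

theorem adlerU_add_eq_div (hs : x + y ≠ 0) :
    adlerU a b x y + z = ((x + y) * (y + z) + (a - b)) / (x + y) := by
  rw [adlerU]
  field_simp
  ring

theorem adlerU_adlerV_add_adlerU_eq_div (ht : y + z ≠ 0)
    (hP : (x + y) * (y + z) - (b - c) ≠ 0) :
    adlerU a c x (adlerV b c y z) + adlerU b c y z
      = (y + z) * ((x + y) * (y + z) + (a - b)) / ((x + y) * (y + z) - (b - c)) :=
  calc adlerU a c x (adlerV b c y z) + adlerU b c y z
      = (adlerU b c y z + adlerV b c y z) + (a - c) / (x + adlerV b c y z) := by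
        rw [adlerU]; ring
    _ = (y + z) + (a - c) * (y + z) / ((x + y) * (y + z) - (b - c)) := by
        rw [adlerU_add_adlerV, add_adlerV_eq_div ht, div_div_eq_mul_div]
    _ = _ := by rw [add_div' _ _ _ hP]; ring

theorem adlerV_add_adlerV_adlerU_eq_div (hs : x + y ≠ 0)
    (hQ : (x + y) * (y + z) + (a - b) ≠ 0) :
    adlerV a b x y + adlerV a c (adlerU a b x y) z
      = (x + y) * ((x + y) * (y + z) - (b - c)) / ((x + y) * (y + z) + (a - b)) :=
  calc adlerV a b x y + adlerV a c (adlerU a b x y) z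
      = (adlerU a b x y + adlerV a b x y) - (a - c) / (adlerU a b x y + z) := by
        rw [adlerV.eq_1 a c]; ring
    _ = (x + y) - (a - c) * (x + y) / ((x + y) * (y + z) + (a - b)) := by
        rw [adlerU_add_adlerV, adlerU_add_eq_div hs, div_div_eq_mul_div]
    _ = _ := by rw [sub_div' hQ]; ring

end Adler

theorem adler_yang_baxter_general (a b c x y z : ℂ)
    -- denominators in Y¹²_{a,b} ∘ Y¹³_{a,c} ∘ Y²³_{b,c} (applied right-to-left)
    (h1 : y + z ≠ 0)
    (h2 : x + adlerV b c y z ≠ 0)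
    -- denominators in Y²³_{b,c} ∘ Y¹³_{a,c} ∘ Y¹²_{a,b} (applied right-to-left)
    (h4 : x + y ≠ 0)
    (h5 : adlerU a b x y + z ≠ 0) :
    (adlerU a b (adlerU a c x (adlerV b c y z)) (adlerU b c y z),
     adlerV a b (adlerU a c x (adlerV b c y z)) (adlerU b c y z),
     adlerV a c x (adlerV b c y z))
    =
    (adlerU a c (adlerU a b x y) z,
     adlerU b c (adlerV a b x y) (adlerV a c (adlerU a b x y) z),
     adlerV b c (adlerV a b x y) (adlerV a c (adlerU a b x y) z)) := by
  have hA := add_adlerV_eq_div (x := x) (b := b) (c := c) h1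
  have hC := adlerU_add_eq_div (a := a) (b := b) (z := z) h4
  have hP : (x + y) * (y + z) - (b - c) ≠ 0 := by
    rw [hA] at h2
    exact (div_ne_zero_iff.mp h2).1
  have hQ : (x + y) * (y + z) + (a - b) ≠ 0 := by
    rw [hC] at h5
    exact (div_ne_zero_iff.mp h5).1
  have hL := adlerU_adlerV_add_adlerU_eq_div (a := a) h1 hP
  have hR := adlerV_add_adlerV_adlerU_eq_div (c := c) h4 hQ
  rw [adlerU_eq_of_add_eq hL, adlerV_eq_of_add_eq hL, adlerU_eq_of_add_eq hA,
    adlerV_eq_of_add_eq hA, adlerU_eq_of_add_eq hR, adlerV_eq_of_add_eq hR,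
    adlerV_eq_of_add_eq hC, adlerU_eq_of_add_eq hC]
  simp only [adlerU, adlerV]
  -- Keep `P` and `Q` atomic, so that `field_simp` sees the nonvanishing facts `hP`, `hQ`.
  generalize hPdef : (x + y) * (y + z) - (b - c) = P at hP ⊢
  generalize hQdef : (x + y) * (y + z) + (a - b) = Q at hQ ⊢
  refine Prod.ext ?_ (Prod.ext ?_ ?_) <;> field_simp <;> subst hPdef hQdef <;> ring

/-- Adler's map satisfies the parametric Yang–Baxter equation
`Y¹²_{a,b} ∘ Y¹³_{a,c} ∘ Y²³_{b,c} = Y²³_{b,c} ∘ Y¹³_{a,c} ∘ Y¹²_{a,b}`,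
wherever all the denominators arising in both composite maps are nonzero. -/
theorem adler_yang_baxter (a b c x y z : ℂ)
    -- denominators in Y¹²_{a,b} ∘ Y¹³_{a,c} ∘ Y²³_{b,c} (applied right-to-left)
    (h1 : y + z ≠ 0)
    (h2 : x + adlerV b c y z ≠ 0)
    (h3 : adlerU a c x (adlerV b c y z) + adlerU b c y z ≠ 0)
    -- denominators in Y²³_{b,c} ∘ Y¹³_{a,c} ∘ Y¹²_{a,b} (applied right-to-left)
    (h4 : x + y ≠ 0)
    (h5 : adlerU a b x y + z ≠ 0)
    (h6 : adlerV a b x y + adlerV a c (adlerU a b x y) z ≠ 0) :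
    (adlerU a b (adlerU a c x (adlerV b c y z)) (adlerU b c y z),
     adlerV a b (adlerU a c x (adlerV b c y z)) (adlerU b c y z),
     adlerV a c x (adlerV b c y z))
    =
    (adlerU a c (adlerU a b x y) z,
     adlerU b c (adlerV a b x y) (adlerV a c (adlerU a b x y) z),
     adlerV b c (adlerV a b x y) (adlerV a c (adlerU a b x y) z)) :=
  adler_yang_baxter_general a b c x y z h1 h2 h4 h5
end

section
/- The Adler–Yamilov map admits the Lax representation L(u;a,λ)·L(v;b,λ) = L(y;b,λ)·L(x;a,λ): for all a, b, λ ∈ ℂ and all x = (x1,x2), y = (y1,y2) ∈ ℂ² with 1 + x1·y2 ≠ 0, setting (u,v) = Y_{a,b}(x,y), the 2×2 matrix identity L(u;a,λ)·L(v;b,λ) = L(y;b,λ)·L(x;a,λ) holds. -/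
/-!
Writing `k = (a - b) / (1 + x₁ y₂)`, the map is polynomial in `k`, and each entry of
`L(u;a,λ) L(v;b,λ) - L(y;b,λ) L(x;a,λ)` is a polynomial multiple of `k (1 + x₁ y₂) - (a - b)`.
So the Lax identity holds for any `k` satisfying that single relation.
-/

/-- First component `u` of the Adler–Yamilov map. -/
noncomputable def ayU (a b : ℂ) (x y : ℂ × ℂ) : ℂ × ℂ :=
  (y.1 - ((a - b) / (1 + x.1 * y.2)) * x.1, y.2)

/-- Second component `v` of the Adler–Yamilov map. -/
noncomputable def ayV (a b : ℂ) (x y : ℂ × ℂ) : ℂ × ℂ :=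
  (x.1, x.2 + ((a - b) / (1 + x.1 * y.2)) * y.2)

/-- The NLS Lax matrix `L(x;a,λ) = [[λ + a + x1·x2, x1],[x2, 1]]`. -/
noncomputable def nlsLax (x : ℂ × ℂ) (a lam : ℂ) : Matrix (Fin 2) (Fin 2) ℂ :=
  !![lam + a + x.1 * x.2, x.1; x.2, 1]

theorem nlsLax_refactor_of_mul_one_add_eq (a b lam k : ℂ) (x y : ℂ × ℂ)
    (hk : k * (1 + x.1 * y.2) = a - b) :
    nlsLax (y.1 - k * x.1, y.2) a lam * nlsLax (x.1, x.2 + k * y.2) b lam =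
      nlsLax y b lam * nlsLax x a lam := by
  simp only [nlsLax, Matrix.mul_fin_two]
  refine congrArg Matrix.of (Matrix.vec2_eq (Matrix.vec2_eq ?_ ?_) (Matrix.vec2_eq ?_ ?_))
  · linear_combination (y.1 * y.2 - x.1 * x.2 - k * x.1 * y.2) * hk
  · linear_combination (-x.1) * hk
  · linear_combination y.2 * hk
  · ring

/-- The Adler–Yamilov map admits the Lax representation
`L(u;a,λ)·L(v;b,λ) = L(y;b,λ)·L(x;a,λ)`. -/
theorem adler_yamilov_lax_representation (a b lam : ℂ) (x y : ℂ × ℂ)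
    (h : 1 + x.1 * y.2 ≠ 0) :
    nlsLax (ayU a b x y) a lam * nlsLax (ayV a b x y) b lam =
      nlsLax y b lam * nlsLax x a lam :=
  nlsLax_refactor_of_mul_one_add_eq a b lam _ x y (div_mul_cancel₀ (a - b) h)
end

section
/- The NLS Lax matrix is a strong Lax matrix for the Adler–Yamilov map: for all a, b ∈ ℂ and all x = (x1,x2), y = (y1,y2), u = (u1,u2), v = (v1,v2) ∈ ℂ² with 1 + x1·y2 ≠ 0, if the refactorisation L(u;a,λ)·L(v;b,λ) = L(y;b,λ)·L(x;a,λ) holds for every λ ∈ ℂ, then (u,v) = Y_{a,b}(x,y), i.e. u1 = y1 - ((a-b)/(1+x1y2))·x1, u2 = y2, v1 = x1, v2 = x2 + ((a-b)/(1+x1y2))·y2. -/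
/-- The NLS Lax matrix is a strong Lax matrix for the Adler–Yamilov map: if the
refactorisation `L(u;a,λ)·L(v;b,λ) = L(y;b,λ)·L(x;a,λ)` holds for every `λ`,
then `(u,v)` is the image of `(x,y)` under the Adler–Yamilov map. -/
theorem nls_lax_is_strong (a b : ℂ) (x y u v : ℂ × ℂ)
    (h : 1 + x.1 * y.2 ≠ 0)
    (hlax : ∀ lam : ℂ, nlsLax u a lam * nlsLax v b lam = nlsLax y b lam * nlsLax x a lam) :
    u.1 = y.1 - ((a - b) / (1 + x.1 * y.2)) * x.1 ∧ u.2 = y.2 ∧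
      v.1 = x.1 ∧ v.2 = x.2 + ((a - b) / (1 + x.1 * y.2)) * y.2 := by
  have e01_0 := congrFun (congrFun (hlax 0) 0) 1
  have e01_1 := congrFun (congrFun (hlax 1) 0) 1
  have e10_0 := congrFun (congrFun (hlax 0) 1) 0
  have e10_1 := congrFun (congrFun (hlax 1) 1) 0
  simp [nlsLax, Matrix.mul_apply, Fin.sum_univ_two] at e01_0 e01_1 e10_0 e10_1
  have hv1 : v.1 = x.1 := by linear_combination e01_1 - e01_0
  have hu2 : u.2 = y.2 := by linear_combination e10_1 - e10_0
  rw [hv1, hu2] at e01_0 e10_0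
  refine ⟨?_, hu2, hv1, ?_⟩
  · field_simp
    linear_combination e01_0
  · field_simp
    linear_combination e10_0
end

section
/- The Adler–Yamilov map satisfies the parametric Yang–Baxter equation: for all parameters a, b, c ∈ ℂ and all (x,y,z) ∈ (ℂ²)³ such that every denominator arising in both composite maps is nonzero, the two compositions Y¹²_{a,b} ∘ Y¹³_{a,c} ∘ Y²³_{b,c} and Y²³_{b,c} ∘ Y¹³_{a,c} ∘ Y¹²_{a,b} agree at (x,y,z). -/
def ayDen (x y : ℂ × ℂ) : ℂ := 1 + x.1 * y.2

noncomputable def ayCoupling (a b : ℂ) (x y : ℂ × ℂ) : ℂ := (a - b) / ayDen x y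

section

variable (a b : ℂ) (x y z : ℂ × ℂ)

lemma ayU_fst : (ayU a b x y).1 = y.1 - ayCoupling a b x y * x.1 := rfl

lemma ayU_snd : (ayU a b x y).2 = y.2 := rfl

lemma ayV_fst : (ayV a b x y).1 = x.1 := rfl

lemma ayV_snd : (ayV a b x y).2 = x.2 + ayCoupling a b x y * y.2 := rfl

lemma ayDen_ayU_right : ayDen x (ayU a b y z) = ayDen x z := rfl

lemma ayDen_ayV_left : ayDen (ayV a b x y) z = ayDen x z := rfl

lemma ayDen_mul_ayDen_ayV (h : ayDen y z ≠ 0) :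
    ayDen y z * ayDen x (ayV a b y z) = ayDen x y * ayDen y z + (a - b) * (x.1 * z.2) := by
  simp only [ayDen, ayV_snd, ayCoupling] at h ⊢
  field_simp
  ring

lemma ayDen_mul_ayDen_ayU (h : ayDen x y ≠ 0) :
    ayDen x y * ayDen (ayU a b x y) z = ayDen x y * ayDen y z - (a - b) * (x.1 * z.2) := by
  simp only [ayDen, ayU_fst, ayCoupling] at h ⊢
  field_simp
  ring

end

section

variable {a b c : ℂ} {x y z : ℂ × ℂ}

lemma ayDen_mul_ayDen_ayV_eq_mul_ayDen_ayV (h1 : ayDen y z ≠ 0) (h4 : ayDen x y ≠ 0)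
    (h5 : ayDen (ayU a b x y) z ≠ 0) :
    ayDen y z * ayDen x (ayV b c y z) =
      ayDen (ayU a b x y) z * ayDen x (ayV a c (ayU a b x y) z) := by
  have h := ayDen_mul_ayDen_ayV a c x _ _ h5
  rw [ayDen_ayU_right] at h
  linear_combination ayDen_mul_ayDen_ayV b c x y z h1 - ayDen_mul_ayDen_ayU a b x y z h4 - h

lemma ayDen_ayV_mul_ayDen_ayU_eq_mul_ayDen_ayU (h1 : ayDen y z ≠ 0)
    (h2 : ayDen x (ayV b c y z) ≠ 0) (h4 : ayDen x y ≠ 0) :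
    ayDen x (ayV b c y z) * ayDen (ayU a c x (ayV b c y z)) z =
      ayDen x y * ayDen (ayU a b x y) z := by
  have h := ayDen_mul_ayDen_ayU a c x _ z h2
  rw [ayDen_ayV_left] at h
  linear_combination h + ayDen_mul_ayDen_ayV b c x y z h1 - ayDen_mul_ayDen_ayU a b x y z h4

end

/-- With `p, q` the denominators `D₄, D₁` and `d, e` the denominators `D₂, D₅`, the six
couplings are the quotients below. -/
theorem yangBaxter_coupling_relations {K : Type*} [Field K] {a b c p q d e : K}
    (hp : p ≠ 0) (hq : q ≠ 0) (hd : d ≠ 0) (he : e ≠ 0)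
    (h : (a - b) * (q * d) + (b - c) * (p * e) = (a - c) * p * q) :
    (a - c) / d = (a - b) / p + (b - c) / (q * d / e) ∧
      (a - c) / e = (a - b) / (p * e / d) + (b - c) / q ∧
      (a - b) / (p * e / d) * ((a - c) / d) = (a - b) / p * ((a - c) / e) ∧
      (b - c) / q * ((a - c) / d) = (b - c) / (q * d / e) * ((a - c) / e) := by
  refine ⟨?_, ?_, ?_, ?_⟩
  · field_simp
    linear_combination -h
  · field_simp
    linear_combination -h
  · field_simp
  · field_simp

theorem ayCoupling_yangBaxter_relations {a b c : ℂ} {x y z : ℂ × ℂ}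
    (h1 : ayDen y z ≠ 0) (h2 : ayDen x (ayV b c y z) ≠ 0)
    (h4 : ayDen x y ≠ 0) (h5 : ayDen (ayU a b x y) z ≠ 0) :
    ayCoupling a c x (ayV b c y z) =
        ayCoupling a b x y + ayCoupling b c (ayV a b x y) (ayV a c (ayU a b x y) z) ∧
      ayCoupling a c (ayU a b x y) z =
        ayCoupling a b (ayU a c x (ayV b c y z)) (ayU b c y z) + ayCoupling b c y z ∧
      ayCoupling a b (ayU a c x (ayV b c y z)) (ayU b c y z) * ayCoupling a c x (ayV b c y z) =
        ayCoupling a b x y * ayCoupling a c (ayU a b x y) z ∧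
      ayCoupling b c y z * ayCoupling a c x (ayV b c y z) =
        ayCoupling b c (ayV a b x y) (ayV a c (ayU a b x y) z) *
          ayCoupling a c (ayU a b x y) z := by
  have hD3 := eq_div_of_mul_eq h2
    ((mul_comm _ _).trans (ayDen_ayV_mul_ayDen_ayU_eq_mul_ayDen_ayU (a := a) h1 h2 h4))
  have hD6 := eq_div_of_mul_eq h5
    ((mul_comm _ _).trans (ayDen_mul_ayDen_ayV_eq_mul_ayDen_ayV (c := c) h1 h4 h5).symm)
  have key : (a - b) * (ayDen y z * ayDen x (ayV b c y z)) +
      (b - c) * (ayDen x y * ayDen (ayU a b x y) z) = (a - c) * ayDen x y * ayDen y z := by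
    linear_combination (a - b) * ayDen_mul_ayDen_ayV b c x y z h1 +
      (b - c) * ayDen_mul_ayDen_ayU a b x y z h4
  simp only [ayCoupling, ayDen_ayU_right, ayDen_ayV_left]
  rw [hD3, hD6]
  exact yangBaxter_coupling_relations h4 h1 h2 h5 key

theorem adler_yamilov_yang_baxter_general (a b c : ℂ) (x y z : ℂ × ℂ)
    -- denominators in Y¹²_{a,b} ∘ Y¹³_{a,c} ∘ Y²³_{b,c} (applied right-to-left)
    (h1 : 1 + y.1 * z.2 ≠ 0)
    (h2 : 1 + x.1 * (ayV b c y z).2 ≠ 0)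
    -- denominators in Y²³_{b,c} ∘ Y¹³_{a,c} ∘ Y¹²_{a,b} (applied right-to-left)
    (h4 : 1 + x.1 * y.2 ≠ 0)
    (h5 : 1 + (ayU a b x y).1 * z.2 ≠ 0) :
    (ayU a b (ayU a c x (ayV b c y z)) (ayU b c y z),
     ayV a b (ayU a c x (ayV b c y z)) (ayU b c y z),
     ayV a c x (ayV b c y z))
    =
    (ayU a c (ayU a b x y) z,
     ayU b c (ayV a b x y) (ayV a c (ayU a b x y) z),
     ayV b c (ayV a b x y) (ayV a c (ayU a b x y) z)) := by
  obtain ⟨hγ, hγ', hαγ, hβγ⟩ := ayCoupling_yangBaxter_relations h1 h2 h4 h5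
  simp only [Prod.ext_iff, ayU_fst, ayU_snd, ayV_fst, ayV_snd]
  refine ⟨⟨?_, trivial⟩, ⟨?_, ?_⟩, trivial, ?_⟩
  · linear_combination x.1 * hαγ + y.1 * hγ'
  · linear_combination -x.1 * hγ
  · linear_combination -z.2 * hγ'
  · linear_combination y.2 * hγ + z.2 * hβγ

/-- The Adler–Yamilov map satisfies the parametric Yang–Baxter equation
`Y¹²_{a,b} ∘ Y¹³_{a,c} ∘ Y²³_{b,c} = Y²³_{b,c} ∘ Y¹³_{a,c} ∘ Y¹²_{a,b}`,
wherever all the denominators arising in both composite maps are nonzero. -/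
theorem adler_yamilov_yang_baxter (a b c : ℂ) (x y z : ℂ × ℂ)
    -- denominators in Y¹²_{a,b} ∘ Y¹³_{a,c} ∘ Y²³_{b,c} (applied right-to-left)
    (h1 : 1 + y.1 * z.2 ≠ 0)
    (h2 : 1 + x.1 * (ayV b c y z).2 ≠ 0)
    (h3 : 1 + (ayU a c x (ayV b c y z)).1 * (ayU b c y z).2 ≠ 0)
    -- denominators in Y²³_{b,c} ∘ Y¹³_{a,c} ∘ Y¹²_{a,b} (applied right-to-left)
    (h4 : 1 + x.1 * y.2 ≠ 0)
    (h5 : 1 + (ayU a b x y).1 * z.2 ≠ 0)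
    (h6 : 1 + (ayV a b x y).1 * (ayV a c (ayU a b x y) z).2 ≠ 0) :
    (ayU a b (ayU a c x (ayV b c y z)) (ayU b c y z),
     ayV a b (ayU a c x (ayV b c y z)) (ayU b c y z),
     ayV a c x (ayV b c y z))
    =
    (ayU a c (ayU a b x y) z,
     ayU b c (ayV a b x y) (ayV a c (ayU a b x y) z),
     ayV b c (ayV a b x y) (ayV a c (ayU a b x y) z)) :=
  adler_yamilov_yang_baxter_general a b c x y z h1 h2 h4 h5
end

section
/- The function I₁(x,y) = x1·x2 + y1·y2 is an invariant of the Adler–Yamilov map: for all a, b ∈ ℂ and (x,y) ∈ ℂ²×ℂ² with 1 + x1·y2 ≠ 0, if (u,v) = Y_{a,b}(x,y) then u1·u2 + v1·v2 = x1·x2 + y1·y2. -/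
/-- `I₁(x,y) = x1·x2 + y1·y2` is an invariant of the Adler–Yamilov map. -/
theorem adler_yamilov_invariant_I1 (a b : ℂ) (x y : ℂ × ℂ)
    (h : 1 + x.1 * y.2 ≠ 0)
    (u v : ℂ × ℂ) (hu : u = ayU a b x y) (hv : v = ayV a b x y) :
    u.1 * u.2 + v.1 * v.2 = x.1 * x.2 + y.1 * y.2 := by
  subst hu hv
  simp only [ayU, ayV]
  field_simp
  ring
end

section
/- The function I₂(x,y) = (a + x1·x2)(b + y1·y2) + x1·y2 + x2·y1 is an invariant of the Adler–Yamilov map: for all a, b ∈ ℂ and (x,y) ∈ ℂ²×ℂ² with 1 + x1·y2 ≠ 0, if (u,v) = Y_{a,b}(x,y) then (a + u1·u2)(b + v1·v2) + u1·v2 + u2·v1 = (a + x1·x2)(b + y1·y2) + x1·y2 + x2·y1. -/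
/-- `I₂(x,y) = (a + x1·x2)(b + y1·y2) + x1·y2 + x2·y1` is an invariant of the
Adler–Yamilov map. -/
theorem adler_yamilov_invariant_I2 (a b : ℂ) (x y : ℂ × ℂ)
    (h : 1 + x.1 * y.2 ≠ 0)
    (u v : ℂ × ℂ) (hu : u = ayU a b x y) (hv : v = ayV a b x y) :
    (a + u.1 * u.2) * (b + v.1 * v.2) + u.1 * v.2 + u.2 * v.1 =
      (a + x.1 * x.2) * (b + y.1 * y.2) + x.1 * y.2 + x.2 * y.1 := by
  subst hu hv
  simp only [ayU, ayV]
  field_simp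
  ring
end

section
/- The trace of the monodromy matrix of the Adler–Yamilov map is the generating function of the invariants I₁ and I₂: for all a, b, λ ∈ ℂ and x = (x1,x2), y = (y1,y2) ∈ ℂ², tr(L(y;b,λ)·L(x;a,λ)) = λ² + λ·(a + b + I₁(x,y)) + I₂(x,y) + 1, where I₁(x,y) = x1·x2 + y1·y2 and I₂(x,y) = (a + x1·x2)(b + y1·y2) + x1·y2 + x2·y1. -/
/-- The trace of the monodromy matrix `M(x,y;a,b,λ) = L(y;b,λ)·L(x;a,λ)` is the
generating function of the invariants `I₁` and `I₂` of the Adler–Yamilov map: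
`tr M = λ² + λ(a + b + I₁(x,y)) + I₂(x,y) + 1`. -/
theorem nls_monodromy_trace (a b lam : ℂ) (x y : ℂ × ℂ) :
    (nlsLax y b lam * nlsLax x a lam).trace =
      lam ^ 2 + lam * (a + b + (x.1 * x.2 + y.1 * y.2)) +
        ((a + x.1 * x.2) * (b + y.1 * y.2) + x.1 * y.2 + x.2 * y.1) + 1 := by
  simp [nlsLax, Matrix.trace_fin_two, Matrix.mul_fin_two]
  ring
end

section
/- The invariants I₁(x1,x2,y1,y2) = x1·x2 + y1·y2 and I₂(x1,x2,y1,y2) = (a + x1·x2)(b + y1·y2) + x1·y2 + x2·y1 of the Adler–Yamilov map are in involution with respect to the canonical Poisson bracket on ℂ⁴: {I₁, I₂} = 0 identically, where {F,G} = (∂F/∂x1)(∂G/∂x2) - (∂F/∂x2)(∂G/∂x1) + (∂F/∂y1)(∂G/∂y2) - (∂F/∂y2)(∂G/∂y1). -/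
/-- The invariant `I₁(x1,x2,y1,y2) = x1·x2 + y1·y2` of the Adler–Yamilov map. -/
def ayI1 (x1 x2 y1 y2 : ℂ) : ℂ := x1 * x2 + y1 * y2

/-- The invariant `I₂(x1,x2,y1,y2) = (a + x1·x2)(b + y1·y2) + x1·y2 + x2·y1`
of the Adler–Yamilov map. -/
def ayI2 (a b x1 x2 y1 y2 : ℂ) : ℂ :=
  (a + x1 * x2) * (b + y1 * y2) + x1 * y2 + x2 * y1

/-- The canonical Poisson bracket on `ℂ⁴`:
`{F,G} = F_{x1}·G_{x2} - F_{x2}·G_{x1} + F_{y1}·G_{y2} - F_{y2}·G_{y1}`,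
evaluated at the point `(x1,x2,y1,y2)`. -/
noncomputable def poissonBracket (F G : ℂ → ℂ → ℂ → ℂ → ℂ) (x1 x2 y1 y2 : ℂ) : ℂ :=
    deriv (fun t => F t x2 y1 y2) x1 * deriv (fun t => G x1 t y1 y2) x2
  - deriv (fun t => F x1 t y1 y2) x2 * deriv (fun t => G t x2 y1 y2) x1
  + deriv (fun t => F x1 x2 t y2) y1 * deriv (fun t => G x1 x2 y1 t) y2
  - deriv (fun t => F x1 x2 y1 t) y2 * deriv (fun t => G x1 x2 t y2) y1

/-- The invariants `I₁` and `I₂` of the Adler–Yamilov map are in involution with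
respect to the canonical Poisson bracket on `ℂ⁴`: `{I₁, I₂} = 0` identically. -/
theorem adler_yamilov_invariants_in_involution (a b x1 x2 y1 y2 : ℂ) :
    poissonBracket ayI1 (ayI2 a b) x1 x2 y1 y2 = 0 := by
  have h1 : deriv (fun t : ℂ => ayI1 t x2 y1 y2) x1 = x2 := by
    simpa [ayI1] using (((hasDerivAt_id x1).mul_const x2).add_const (y1*y2)).deriv
  have h2 : deriv (fun t : ℂ => ayI1 x1 t y1 y2) x2 = x1 := by
    simpa [ayI1] using (((hasDerivAt_id x2).const_mul x1).add_const (y1*y2)).deriv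
  have h3 : deriv (fun t : ℂ => ayI1 x1 x2 t y2) y1 = y2 := by
    simpa [ayI1] using ((((hasDerivAt_id y1).mul_const y2).const_add (x1*x2))).deriv
  have h4 : deriv (fun t : ℂ => ayI1 x1 x2 y1 t) y2 = y1 := by
    simpa [ayI1] using ((((hasDerivAt_id y2).const_mul y1).const_add (x1*x2))).deriv
  have g1 : deriv (fun t : ℂ => ayI2 a b t x2 y1 y2) x1 = x2 * (b + y1*y2) + y2 := by
    have : HasDerivAt (fun t : ℂ => ayI2 a b t x2 y1 y2)
        ((1 * x2) * (b + y1*y2) + (1 * y2)) x1 := by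
      simp only [ayI2]
      exact ((((hasDerivAt_id x1).mul_const x2).const_add a).mul_const
        (b + y1*y2)).add (((hasDerivAt_id x1).mul_const y2)) |>.add_const (x2*y1)
    simpa using this.deriv
  have g2 : deriv (fun t : ℂ => ayI2 a b x1 t y1 y2) x2 = x1 * (b + y1*y2) + y1 := by
    have : HasDerivAt (fun t : ℂ => ayI2 a b x1 t y1 y2)
        ((x1 * 1) * (b + y1*y2) + (1 * y1)) x2 := by
      simp only [ayI2]
      exact (((((hasDerivAt_id x2).const_mul x1).const_add a).mul_const
        (b + y1*y2)).add_const (x1*y2)).add ((hasDerivAt_id x2).mul_const y1)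
    simpa using this.deriv
  have g3 : deriv (fun t : ℂ => ayI2 a b x1 x2 t y2) y1 = (a + x1*x2) * y2 + x2 := by
    have : HasDerivAt (fun t : ℂ => ayI2 a b x1 x2 t y2)
        ((a + x1*x2) * (1 * y2) + (x2 * 1)) y1 := by
      simp only [ayI2]
      exact ((((hasDerivAt_id y1).mul_const y2).const_add b).const_mul
        (a + x1*x2)).add_const (x1*y2) |>.add ((hasDerivAt_id y1).const_mul x2)
    simpa using this.deriv
  have g4 : deriv (fun t : ℂ => ayI2 a b x1 x2 y1 t) y2 = (a + x1*x2) * y1 + x1 := by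
    have : HasDerivAt (fun t : ℂ => ayI2 a b x1 x2 y1 t)
        ((a + x1*x2) * (y1 * 1) + (x1 * 1)) y2 := by
      simp only [ayI2]
      exact (((((hasDerivAt_id y2).const_mul y1).const_add b).const_mul
        (a + x1*x2)).add ((hasDerivAt_id y2).const_mul x1)).add_const (x2*y1)
    simpa using this.deriv
  simp only [poissonBracket, h1, h2, h3, h4, g1, g2, g3, g4]
  ring
end

section
/- The invariants I₁(x1,x2,y1,y2) = x1·x2 + y1·y2 and I₂(x1,x2,y1,y2) = (a + x1·x2)(b + y1·y2) + x1·y2 + x2·y1 of the Adler–Yamilov map are functionally independent: there exists a point of ℂ⁴ (for example (x1,x2,y1,y2) = (1,0,0,1)) at which the gradients ∇I₁ and ∇I₂ are linearly independent over ℂ. -/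
/-- The gradient `∇F = (F_{x1}, F_{x2}, F_{y1}, F_{y2})` of a function on `ℂ⁴`. -/
noncomputable def gradC4 (F : ℂ → ℂ → ℂ → ℂ → ℂ) (x1 x2 y1 y2 : ℂ) : Fin 4 → ℂ :=
  ![deriv (fun t => F t x2 y1 y2) x1,
    deriv (fun t => F x1 t y1 y2) x2,
    deriv (fun t => F x1 x2 t y2) y1,
    deriv (fun t => F x1 x2 y1 t) y2]

/-- The invariants `I₁` and `I₂` of the Adler–Yamilov map are functionally
independent: there is a point of `ℂ⁴` at which the gradients `∇I₁` and `∇I₂`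
are linearly independent over `ℂ`. -/
theorem adler_yamilov_invariants_functionally_independent (a b : ℂ) :
    ∃ x1 x2 y1 y2 : ℂ,
      LinearIndependent ℂ
        ![gradC4 ayI1 x1 x2 y1 y2, gradC4 (ayI2 a b) x1 x2 y1 y2] := by
  refine ⟨1, 0, 0, 1, ?_⟩
  have h1 : gradC4 ayI1 1 0 0 1 = ![0, 1, 1, 0] := by
    simp [gradC4, ayI1]
  have key : ∀ (c x : ℂ), deriv (fun t : ℂ => c + t) x = 1 := fun c x =>
    by simpa using ((hasDerivAt_id x).const_add c).deriv
  have h2 : gradC4 (ayI2 a b) 1 0 0 1 = ![1, b, a, 1] := by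
    funext i
    fin_cases i <;> simp [gradC4, ayI2] <;> ring_nf <;>
      rw [key] <;> ring
  rw [h1, h2, linearIndependent_fin2]
  constructor
  · intro h
    have := congrFun h 0
    simp at this
  · intro c h
    have h0 := congrFun h 0
    have h1' := congrFun h 1
    simp at h0 h1'
    simp [h0] at h1'
end

section
/- The Adler–Yamilov map preserves the canonical Poisson structure on ℂ⁴: for all a, b ∈ ℂ and every point p = (x1,x2,y1,y2) ∈ ℂ⁴ with 1 + x1·y2 ≠ 0, the Jacobian matrix D of the map Y_{a,b} (viewed as a map ℂ⁴ → ℂ⁴ in the coordinates (x1,x2,y1,y2) ↦ (u1,u2,v1,v2)) satisfies D · J₂ · Dᵀ = J₂ at p, where J₂ = diag(K, K) and K = [[0,1],[-1,0]]. -/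
/-!
Away from the pole the Jacobian of `Y_{a,b}` is the permutation swapping `(x1,x2)` with
`(y1,y2)`, corrected only in the entries `∂u1/∂x1, ∂u1/∂y2, ∂v2/∂x1, ∂v2/∂y2`. The corrections
`∂u1/∂y2` and `∂v2/∂x1` never meet a nonzero entry in a bracket of two rows, and the diagonal ones
are `∓(a-b)/(1+x1y2)²`, which cancel in `{u1, v2}`; so the canonical brackets survive.
-/

/-- The Adler–Yamilov map viewed as a map `ℂ⁴ → ℂ⁴` in the coordinates
`(x1,x2,y1,y2) ↦ (u1,u2,v1,v2)`. -/
noncomputable def ayMap (a b : ℂ) (p : Fin 4 → ℂ) : Fin 4 → ℂ :=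
  ![p 2 - ((a - b) / (1 + p 0 * p 3)) * p 0,
    p 3,
    p 0,
    p 1 + ((a - b) / (1 + p 0 * p 3)) * p 3]

/-- The Jacobian matrix of the Adler–Yamilov map at a point `p`. -/
noncomputable def ayJacobian (a b : ℂ) (p : Fin 4 → ℂ) : Matrix (Fin 4) (Fin 4) ℂ :=
  Matrix.of fun i j => deriv (fun t => ayMap a b (Function.update p j t) i) (p j)

/-- The canonical Poisson matrix `J₂ = diag(K, K)` with `K = [[0,1],[-1,0]]`. -/
def J2 : Matrix (Fin 4) (Fin 4) ℂ :=
  !![0, 1, 0, 0; -1, 0, 0, 0; 0, 0, 0, 1; 0, 0, -1, 0]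

section Derivatives

variable {𝕜 : Type*} [NontriviallyNormedField 𝕜] {c d x : 𝕜}

theorem hasDerivAt_const_div_one_add_mul (h : 1 + x * d ≠ 0) :
    HasDerivAt (fun t => c / (1 + t * d)) (-(c * d) / (1 + x * d) ^ 2) x := by
  have hden : HasDerivAt (fun t => 1 + t * d) d x := by
    simpa using ((hasDerivAt_id x).mul_const d).const_add 1
  exact ((hasDerivAt_const x c).fun_div hden h).congr_deriv (by ring)

theorem hasDerivAt_const_div_one_add_mul_mul_self (h : 1 + x * d ≠ 0) :
    HasDerivAt (fun t => c / (1 + t * d) * t) (c / (1 + x * d) ^ 2) x := by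
  refine ((hasDerivAt_const_div_one_add_mul h).fun_mul (hasDerivAt_id' x)).congr_deriv ?_
  field_simp
  ring

theorem deriv_const_div_one_add_mul' (h : 1 + d * x ≠ 0) :
    deriv (fun t => c / (1 + d * t)) x = -(c * d) / (1 + d * x) ^ 2 := by
  simp_rw [mul_comm d] at h ⊢
  exact (hasDerivAt_const_div_one_add_mul h).deriv

theorem deriv_const_div_one_add_mul_mul_self' (h : 1 + d * x ≠ 0) :
    deriv (fun t => c / (1 + d * t) * t) x = c / (1 + d * x) ^ 2 := by
  simp_rw [mul_comm d] at h ⊢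
  exact (hasDerivAt_const_div_one_add_mul_mul_self h).deriv

end Derivatives

def ayJacobianForm (u v w : ℂ) : Matrix (Fin 4) (Fin 4) ℂ :=
  !![-u, 0, 1, v; 0, 0, 0, 1; 1, 0, 0, 0; -w, 1, 0, u]

theorem ayJacobianForm_mul_J2_mul_transpose (u v w : ℂ) :
    ayJacobianForm u v w * J2 * (ayJacobianForm u v w).transpose = J2 := by
  ext i j
  fin_cases i <;> fin_cases j <;>
    simp [ayJacobianForm, J2, Matrix.mul_apply, Fin.sum_univ_four]

theorem ayJacobian_eq (a b : ℂ) {p : Fin 4 → ℂ} (h : 1 + p 0 * p 3 ≠ 0) :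
    ayJacobian a b p = ayJacobianForm ((a - b) / (1 + p 0 * p 3) ^ 2)
      ((a - b) * p 0 ^ 2 / (1 + p 0 * p 3) ^ 2) ((a - b) * p 3 ^ 2 / (1 + p 0 * p 3) ^ 2) := by
  ext i j
  fin_cases i <;> fin_cases j <;>
    simp [ayJacobian, ayMap, ayJacobianForm, Function.update_apply]
  · rw [(hasDerivAt_const_div_one_add_mul_mul_self h).deriv]
  · rw [deriv_const_div_one_add_mul' h]
    ring
  · rw [(hasDerivAt_const_div_one_add_mul h).deriv]
    ring
  · rw [deriv_const_div_one_add_mul_mul_self' h]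

/-- The Adler–Yamilov map preserves the canonical Poisson structure on `ℂ⁴`:
its Jacobian matrix `D` satisfies `D·J₂·Dᵀ = J₂` at every point of its domain. -/
theorem adler_yamilov_preserves_poisson (a b : ℂ) (p : Fin 4 → ℂ)
    (h : 1 + p 0 * p 3 ≠ 0) :
    ayJacobian a b p * J2 * (ayJacobian a b p).transpose = J2 := by
  rw [ayJacobian_eq a b h]
  exact ayJacobianForm_mul_J2_mul_transpose _ _ _
end

section
/- The Yang–Baxter map associated with the DNLS equation admits the Lax representation L(u;a,λ)·L(v;b,λ) = L(y;b,λ)·L(x;a,λ): for all a, b, λ ∈ ℂ and x = (x1,x2), y = (y1,y2) ∈ ℂ² with a - x1·y2 ≠ 0 and b - x1·y2 ≠ 0, setting (u,v) = Y_{a,b}(x,y), the 2×2 matrix identity L(u;a,λ)·L(v;b,λ) = L(y;b,λ)·L(x;a,λ) holds. -/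
/-- First component `u` of the DNLS Yang–Baxter map. -/
noncomputable def dnlsU (a b : ℂ) (x y : ℂ × ℂ) : ℂ × ℂ :=
  (y.1 + ((a - b) / (a - x.1 * y.2)) * x.1,
   ((a - x.1 * y.2) / (b - x.1 * y.2)) * y.2)

/-- Second component `v` of the DNLS Yang–Baxter map. -/
noncomputable def dnlsV (a b : ℂ) (x y : ℂ × ℂ) : ℂ × ℂ :=
  (((b - x.1 * y.2) / (a - x.1 * y.2)) * x.1,
   x.2 + ((b - a) / (b - x.1 * y.2)) * y.2)

/-- The DNLS Lax matrix `L(x;a,λ) = [[λ²(a + x1·x2) + 1, λ·x1],[λ·x2, 1]]`. -/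
noncomputable def dnlsLax (x : ℂ × ℂ) (a lam : ℂ) : Matrix (Fin 2) (Fin 2) ℂ :=
  !![lam ^ 2 * (a + x.1 * x.2) + 1, lam * x.1; lam * x.2, 1]

set_option maxHeartbeats 2000000 in
/-- The DNLS Yang–Baxter map admits the Lax representation
`L(u;a,λ)·L(v;b,λ) = L(y;b,λ)·L(x;a,λ)`. -/
theorem dnls_lax_representation (a b lam : ℂ) (x y : ℂ × ℂ)
    (ha : a - x.1 * y.2 ≠ 0) (hb : b - x.1 * y.2 ≠ 0) :
    dnlsLax (dnlsU a b x y) a lam * dnlsLax (dnlsV a b x y) b lam =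
      dnlsLax y b lam * dnlsLax x a lam := by
  simp only [dnlsLax, dnlsU, dnlsV]
  ext i j
  fin_cases i <;> fin_cases j <;>
    simp [Matrix.mul_apply, Fin.sum_univ_succ] <;>
    field_simp <;> ring
end

section
/- The function I₁(x,y) = (a + x1·x2)(b + y1·y2) is an invariant of the DNLS Yang–Baxter map: for all a, b ∈ ℂ and (x,y) ∈ ℂ²×ℂ² with a - x1·y2 ≠ 0 and b - x1·y2 ≠ 0, if (u,v) = Y_{a,b}(x,y) then (a + u1·u2)(b + v1·v2) = (a + x1·x2)(b + y1·y2). -/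
/-- `I₁(x,y) = (a + x1·x2)(b + y1·y2)` is an invariant of the DNLS
Yang–Baxter map. -/
theorem dnls_invariant_I1 (a b : ℂ) (x y : ℂ × ℂ)
    (ha : a - x.1 * y.2 ≠ 0) (hb : b - x.1 * y.2 ≠ 0)
    (u v : ℂ × ℂ) (hu : u = dnlsU a b x y) (hv : v = dnlsV a b x y) :
    (a + u.1 * u.2) * (b + v.1 * v.2) = (a + x.1 * x.2) * (b + y.1 * y.2) := by
  subst hu hv
  simp only [dnlsU, dnlsV]
  field_simp
  ring
end

section
/- The Casimir functions C₁ = x1 + y1 and C₂ = x2 + y2 are invariants of the DNLS Yang–Baxter map: for all a, b ∈ ℂ and (x,y) ∈ ℂ²×ℂ² with a - x1·y2 ≠ 0 and b - x1·y2 ≠ 0, if (u,v) = Y_{a,b}(x,y) then u1 + v1 = x1 + y1 and u2 + v2 = x2 + y2. -/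
/-- The Casimir functions `C₁ = x1 + y1` and `C₂ = x2 + y2` are invariants of
the DNLS Yang–Baxter map. -/
theorem dnls_casimirs_invariant (a b : ℂ) (x y : ℂ × ℂ)
    (ha : a - x.1 * y.2 ≠ 0) (hb : b - x.1 * y.2 ≠ 0)
    (u v : ℂ × ℂ) (hu : u = dnlsU a b x y) (hv : v = dnlsV a b x y) :
    u.1 + v.1 = x.1 + y.1 ∧ u.2 + v.2 = x.2 + y.2 := by
  subst hu hv
  constructor <;> simp only [dnlsU, dnlsV] <;> field_simp <;> ring
end

section
/- The invariants of the transfer map associated with the Adler–Yamilov map are pairwise in involution: on ℂ^{4n} with coordinates (x_{1,1}, x_{2,1}, y_{1,1}, y_{2,1}, …, x_{1,n}, x_{2,n}, y_{1,n}, y_{2,n}), define for i = 1,…,n the functions I_{1,i} = x_{1,i}·x_{2,i} + y_{1,i}·y_{2,i} and I_{2,i} = (a_i + x_{1,i}·x_{2,i})(b_i + y_{1,i}·y_{2,i}) + x_{1,i}·y_{2,i} + x_{2,i}·y_{1,i}, where a_i, b_i ∈ ℂ are parameters. Then for all indices, {I_{1,i}, I_{1,j}} = {I_{2,i}, I_{2,j}}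 = {I_{1,i}, I_{2,j}} = 0 identically (including i = j), where the Poisson bracket is {F,G} = Σ_{i=1}^{n} [(∂F/∂x_{1,i})(∂G/∂x_{2,i}) - (∂F/∂x_{2,i})(∂G/∂x_{1,i}) + (∂F/∂y_{1,i})(∂G/∂y_{2,i}) - (∂F/∂y_{2,i})(∂G/∂y_{1,i})]. -/
/-- The Poisson bracket on `ℂ^{4n}` (points described by the four coordinate
vectors `x1, x2, y1, y2 : Fin n → ℂ`) corresponding to the block-diagonal
Poisson matrix `J_{2n} = diag(J₂, …, J₂)` with `J₂ = diag(K,K)`,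
`K = [[0,1],[-1,0]]`:
`{F,G} = Σᵢ (F_{x_{1,i}}·G_{x_{2,i}} - F_{x_{2,i}}·G_{x_{1,i}}
           + F_{y_{1,i}}·G_{y_{2,i}} - F_{y_{2,i}}·G_{y_{1,i}})`. -/
noncomputable def transferPoissonBracket {n : ℕ}
    (F G : (Fin n → ℂ) → (Fin n → ℂ) → (Fin n → ℂ) → (Fin n → ℂ) → ℂ)
    (x1 x2 y1 y2 : Fin n → ℂ) : ℂ :=
  ∑ i : Fin n,
    (deriv (fun t => F (Function.update x1 i t) x2 y1 y2) (x1 i) *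
       deriv (fun t => G x1 (Function.update x2 i t) y1 y2) (x2 i)
     - deriv (fun t => F x1 (Function.update x2 i t) y1 y2) (x2 i) *
       deriv (fun t => G (Function.update x1 i t) x2 y1 y2) (x1 i)
     + deriv (fun t => F x1 x2 (Function.update y1 i t) y2) (y1 i) *
       deriv (fun t => G x1 x2 y1 (Function.update y2 i t)) (y2 i)
     - deriv (fun t => F x1 x2 y1 (Function.update y2 i t)) (y2 i) *
       deriv (fun t => G x1 x2 (Function.update y1 i t) y2) (y1 i))

/-- The invariant `I_{1,i} = x_{1,i}·x_{2,i} + y_{1,i}·y_{2,i}` of the transfer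
map associated with the Adler–Yamilov map. -/
def transferI1 {n : ℕ} (i : Fin n) :
    (Fin n → ℂ) → (Fin n → ℂ) → (Fin n → ℂ) → (Fin n → ℂ) → ℂ :=
  fun x1 x2 y1 y2 => x1 i * x2 i + y1 i * y2 i

/-- The invariant
`I_{2,i} = (aᵢ + x_{1,i}·x_{2,i})(bᵢ + y_{1,i}·y_{2,i}) + x_{1,i}·y_{2,i} + x_{2,i}·y_{1,i}`
of the transfer map associated with the Adler–Yamilov map. -/
def transferI2 {n : ℕ} (a b : Fin n → ℂ) (i : Fin n) :
    (Fin n → ℂ) → (Fin n → ℂ) → (Fin n → ℂ) → (Fin n → ℂ) → ℂ :=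
  fun x1 x2 y1 y2 =>
    (a i + x1 i * x2 i) * (b i + y1 i * y2 i) + x1 i * y2 i + x2 i * y1 i

section Aux

variable {n : ℕ}

private lemma deriv_eq_lin (f : ℂ → ℂ) (c d x : ℂ) (h : ∀ t, f t = c * t + d) :
    deriv f x = c := by
  rw [show f = fun t => c * t + d from funext h]
  simpa using (((hasDerivAt_id x).const_mul c).add_const d).deriv

private lemma dI1x1 (i k : Fin n) (x1 x2 y1 y2 : Fin n → ℂ) (s : ℂ) :
    deriv (fun t => transferI1 i (Function.update x1 k t) x2 y1 y2) s
      = if i = k then x2 i else 0 := by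
  by_cases h : i = k
  · subst h; rw [if_pos rfl]; simp only [transferI1, Function.update_self]
    exact deriv_eq_lin _ _ (y1 i * y2 i) _ (fun t => by ring)
  · rw [if_neg h]; simp [transferI1, Function.update_of_ne h]

private lemma dI1x2 (i k : Fin n) (x1 x2 y1 y2 : Fin n → ℂ) (s : ℂ) :
    deriv (fun t => transferI1 i x1 (Function.update x2 k t) y1 y2) s
      = if i = k then x1 i else 0 := by
  by_cases h : i = k
  · subst h; rw [if_pos rfl]; simp only [transferI1, Function.update_self]
    exact deriv_eq_lin _ _ (y1 i * y2 i) _ (fun t => by ring)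
  · rw [if_neg h]; simp [transferI1, Function.update_of_ne h]

private lemma dI1y1 (i k : Fin n) (x1 x2 y1 y2 : Fin n → ℂ) (s : ℂ) :
    deriv (fun t => transferI1 i x1 x2 (Function.update y1 k t) y2) s
      = if i = k then y2 i else 0 := by
  by_cases h : i = k
  · subst h; rw [if_pos rfl]; simp only [transferI1, Function.update_self]
    exact deriv_eq_lin _ _ (x1 i * x2 i) _ (fun t => by ring)
  · rw [if_neg h]; simp [transferI1, Function.update_of_ne h]

private lemma dI1y2 (i k : Fin n) (x1 x2 y1 y2 : Fin n → ℂ) (s : ℂ) :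
    deriv (fun t => transferI1 i x1 x2 y1 (Function.update y2 k t)) s
      = if i = k then y1 i else 0 := by
  by_cases h : i = k
  · subst h; rw [if_pos rfl]; simp only [transferI1, Function.update_self]
    exact deriv_eq_lin _ _ (x1 i * x2 i) _ (fun t => by ring)
  · rw [if_neg h]; simp [transferI1, Function.update_of_ne h]

private lemma dI2x1 (a b : Fin n → ℂ) (i k : Fin n) (x1 x2 y1 y2 : Fin n → ℂ) (s : ℂ) :
    deriv (fun t => transferI2 a b i (Function.update x1 k t) x2 y1 y2) s
      = if i = k then x2 i * (b i + y1 i * y2 i) + y2 i else 0 := by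
  by_cases h : i = k
  · subst h; rw [if_pos rfl]; simp only [transferI2, Function.update_self]
    exact deriv_eq_lin _ _ (a i * (b i + y1 i * y2 i) + x2 i * y1 i) _ (fun t => by ring)
  · rw [if_neg h]; simp [transferI2, Function.update_of_ne h]

private lemma dI2x2 (a b : Fin n → ℂ) (i k : Fin n) (x1 x2 y1 y2 : Fin n → ℂ) (s : ℂ) :
    deriv (fun t => transferI2 a b i x1 (Function.update x2 k t) y1 y2) s
      = if i = k then x1 i * (b i + y1 i * y2 i) + y1 i else 0 := by
  by_cases h : i = k
  · subst h; rw [if_pos rfl]; simp only [transferI2, Function.update_self]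
    exact deriv_eq_lin _ _ (a i * (b i + y1 i * y2 i) + x1 i * y2 i) _ (fun t => by ring)
  · rw [if_neg h]; simp [transferI2, Function.update_of_ne h]

private lemma dI2y1 (a b : Fin n → ℂ) (i k : Fin n) (x1 x2 y1 y2 : Fin n → ℂ) (s : ℂ) :
    deriv (fun t => transferI2 a b i x1 x2 (Function.update y1 k t) y2) s
      = if i = k then (a i + x1 i * x2 i) * y2 i + x2 i else 0 := by
  by_cases h : i = k
  · subst h; rw [if_pos rfl]; simp only [transferI2, Function.update_self]
    exact deriv_eq_lin _ _ ((a i + x1 i * x2 i) * b i + x1 i * y2 i) _ (fun t => by ring)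
  · rw [if_neg h]; simp [transferI2, Function.update_of_ne h]

private lemma dI2y2 (a b : Fin n → ℂ) (i k : Fin n) (x1 x2 y1 y2 : Fin n → ℂ) (s : ℂ) :
    deriv (fun t => transferI2 a b i x1 x2 y1 (Function.update y2 k t)) s
      = if i = k then (a i + x1 i * x2 i) * y1 i + x1 i else 0 := by
  by_cases h : i = k
  · subst h; rw [if_pos rfl]; simp only [transferI2, Function.update_self]
    exact deriv_eq_lin _ _ ((a i + x1 i * x2 i) * b i + x2 i * y1 i) _ (fun t => by ring)
  · rw [if_neg h]; simp [transferI2, Function.update_of_ne h]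

end Aux

/-- The invariants of the transfer map associated with the Adler–Yamilov map
are pairwise in involution (including `i = j`) with respect to the Poisson
bracket of `J_{2n} = diag(J₂, …, J₂)`. -/
theorem transfer_invariants_in_involution (n : ℕ) (a b : Fin n → ℂ)
    (x1 x2 y1 y2 : Fin n → ℂ) (i j : Fin n) :
    transferPoissonBracket (transferI1 i) (transferI1 j) x1 x2 y1 y2 = 0 ∧
    transferPoissonBracket (transferI2 a b i) (transferI2 a b j) x1 x2 y1 y2 = 0 ∧
    transferPoissonBracket (transferI1 i) (transferI2 a b j) x1 x2 y1 y2 = 0 := by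
  refine ⟨?_, ?_, ?_⟩ <;>
    · unfold transferPoissonBracket
      refine Finset.sum_eq_zero fun k _ => ?_
      simp only [dI1x1, dI1x2, dI1y1, dI1y2, dI2x1, dI2x2, dI2y1, dI2y2]
      split_ifs <;> subst_vars <;> ring
end
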